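/- arXiv:2006.15869 — 8 statements merged into one kernel-verified Lean document; each statement's English description precedes it below -/
import Mathlib

section
/- In the free Lie ring generated by X and Y, the degree-6 identity [X,[X,[Y,[Y,[X,Y]]]]] + 3[Y,[X,[X,[Y,[X,Y]]]]] - 3[X,[Y,[X,[Y,[X,Y]]]]] - [Y,[Y,[X,[X,[X,Y]]]]] = 0 holds. -/
/-- In the free Lie ring generated by `X` and `Y` (equivalently, in any Lie ring), the degree-6
identity `[X,[X,[Y,[Y,[X,Y]]]]] + 3[Y,[X,[X,[Y,[X,Y]]]]] - 3[X,[Y,[X,[Y,[X,Y]]]]]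
- [Y,[Y,[X,[X,[X,Y]]]]] = 0` holds. -/
theorem degree_six_identity_ii (L : Type*) [LieRing L] (X Y : L) :
    ⁅X, ⁅X, ⁅Y, ⁅Y, ⁅X, Y⁆⁆⁆⁆⁆ + (3 : ℤ) • ⁅Y, ⁅X, ⁅X, ⁅Y, ⁅X, Y⁆⁆⁆⁆⁆
      - (3 : ℤ) • ⁅X, ⁅Y, ⁅X, ⁅Y, ⁅X, Y⁆⁆⁆⁆⁆ - ⁅Y, ⁅Y, ⁅X, ⁅X, ⁅X, Y⁆⁆⁆⁆⁆ = 0 := by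
  set a := ⁅X, Y⁆ with ha
  set q := ⁅X, ⁅Y, a⁆⁆ with hqdef
  have hq : ⁅Y, ⁅X, a⁆⁆ = q := by
    have h := lie_lie X Y a
    rw [← ha, lie_self, ← hqdef] at h
    exact (sub_eq_zero.mp h.symm).symm
  -- expand T1
  have h1 : ⁅X, ⁅Y, ⁅Y, a⁆⁆⁆ = ⁅a, ⁅Y, a⁆⁆ + ⁅Y, q⁆ := by
    rw [leibniz_lie X Y ⁅Y, a⁆, ← ha, ← hqdef]
  have h2 : ⁅X, ⁅a, ⁅Y, a⁆⁆⁆ = ⁅⁅X, a⁆, ⁅Y, a⁆⁆ + ⁅a, q⁆ := by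
    rw [leibniz_lie X a ⁅Y, a⁆, ← hqdef]
  have h3 : ⁅X, ⁅Y, q⁆⁆ = ⁅a, q⁆ + ⁅Y, ⁅X, q⁆⁆ := by
    rw [leibniz_lie X Y q, ← ha]
  have hT1 : ⁅X, ⁅X, ⁅Y, ⁅Y, a⁆⁆⁆⁆
      = ⁅⁅X, a⁆, ⁅Y, a⁆⁆ + (2 : ℤ) • ⁅a, q⁆ + ⁅Y, ⁅X, q⁆⁆ := by
    rw [h1, lie_add, h2, h3]
    abel
  -- expand T4
  have h4 : ⁅Y, ⁅X, ⁅X, a⁆⁆⁆ = -⁅a, ⁅X, a⁆⁆ + ⁅X, q⁆ := by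
    have hyx : ⁅Y, X⁆ = -a := by rw [← lie_skew, ha]
    rw [leibniz_lie Y X ⁅X, a⁆, hyx, hq, neg_lie]
  have h5 : ⁅Y, ⁅a, ⁅X, a⁆⁆⁆ = -⁅⁅X, a⁆, ⁅Y, a⁆⁆ + ⁅a, q⁆ := by
    rw [leibniz_lie Y a ⁅X, a⁆, hq, ← lie_skew ⁅X, a⁆ ⁅Y, a⁆, neg_neg]
  have hT4 : ⁅Y, ⁅Y, ⁅X, ⁅X, a⁆⁆⁆⁆
      = ⁅⁅X, a⁆, ⁅Y, a⁆⁆ - ⁅a, q⁆ + ⁅Y, ⁅X, q⁆⁆ := by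
    rw [h4, lie_add, lie_neg, h5]
    abel
  rw [hT1, hT4, h3]
  abel
end

section
/- In the free Lie ring generated by X and Y, the degree-6 identity [Y,[Y,[X,[Y,[X,Y]]]]] - 2[Y,[X,[Y,[Y,[X,Y]]]]] + [X,[Y,[Y,[Y,[X,Y]]]]] = 0 holds. -/
/-- In the free Lie ring generated by `X` and `Y` (equivalently, in any Lie ring), the degree-6
identity `[Y,[Y,[X,[Y,[X,Y]]]]] - 2[Y,[X,[Y,[Y,[X,Y]]]]] + [X,[Y,[Y,[Y,[X,Y]]]]] = 0` holds. -/
theorem degree_six_identity_iii (L : Type*) [LieRing L] (X Y : L) :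
    ⁅Y, ⁅Y, ⁅X, ⁅Y, ⁅X, Y⁆⁆⁆⁆⁆ - (2 : ℤ) • ⁅Y, ⁅X, ⁅Y, ⁅Y, ⁅X, Y⁆⁆⁆⁆⁆
      + ⁅X, ⁅Y, ⁅Y, ⁅Y, ⁅X, Y⁆⁆⁆⁆⁆ = 0 := by
  set W := ⁅Y, ⁅X, Y⁆⁆ with hW
  set P := ⁅X, Y⁆ with hP
  have hPY : ⁅P, Y⁆ = -W := by rw [hP, hW, ← lie_skew]
  -- C - B = ⁅P, ⁅Y, W⁆⁆
  have hC : ⁅X, ⁅Y, ⁅Y, W⁆⁆⁆ = ⁅P, ⁅Y, W⁆⁆ + ⁅Y, ⁅X, ⁅Y, W⁆⁆⁆ := leibniz_lie X Y ⁅Y, W⁆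
  -- A - B = -⁅Y, ⁅P, W⁆⁆
  have hAB : ⁅Y, ⁅Y, ⁅X, W⁆⁆⁆ = -⁅Y, ⁅P, W⁆⁆ + ⁅Y, ⁅X, ⁅Y, W⁆⁆⁆ := by
    have h : ⁅X, ⁅Y, W⁆⁆ = ⁅P, W⁆ + ⁅Y, ⁅X, W⁆⁆ := leibniz_lie X Y W
    rw [h, lie_add]
    abel
  -- ⁅P, ⁅Y, W⁆⁆ = ⁅Y, ⁅P, W⁆⁆ since ⁅⁅P,Y⁆,W⁆ = ⁅-W,W⁆ = 0
  have hPYW : ⁅P, ⁅Y, W⁆⁆ = ⁅Y, ⁅P, W⁆⁆ := by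
    have h := leibniz_lie P Y W
    rw [hPY] at h
    simpa [neg_lie] using h
  rw [hC, hAB, hPYW, two_smul]
  abel
end

section
/- For integers n ≥ 1 and 0 ≤ d ≤ n-1, the alternating sum ∑_{m=d+1}^{n} ((-1)^{m-1}/m) · C(n - d - 1, m - 1 - d) equals (-1)^d / (n · C(n-1, d)). -/
/-!
Put `n = d + k + 1` and `m = d + 1 + j`. The sum becomes `(-1)^d` times
`∑ⱼ (-1)^j C(k, j) / (d + 1 + j)`, which is `(-1)^k` times the `k`-th forward difference of
`x ↦ 1/x` at `d + 1`. By induction on `k` that difference is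
`(-1)^k k! / ((d + 1)(d + 2) ⋯ (d + k + 1))`, and
`(d + 1) ⋯ (d + k + 1) = n · C(n - 1, d) · k!`.
When `d ≥ n` both sides vanish.
-/

open Finset Nat fwdDiff

theorem sum_range_neg_one_pow_mul_choose_mul_eq_fwdDiff_iter {R : Type*} [CommRing R]
    (f : ℕ → R) (k y : ℕ) :
    ∑ j ∈ range (k + 1), (-1) ^ j * k.choose j * f (y + j) = (-1) ^ k * (Δ_[1])^[k] f y := by
  rw [fwdDiff_iter_eq_sum_shift, mul_sum]
  refine sum_congr rfl fun j hj ↦ ?_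
  obtain ⟨i, rfl⟩ := Nat.exists_eq_add_of_le (Nat.lt_succ_iff.mp (mem_range.mp hj))
  simp only [zsmul_eq_mul, smul_eq_mul, Nat.add_sub_cancel_left]
  have hsign : (-1 : R) ^ (j + i) * (-1) ^ i = (-1) ^ j := by
    rw [pow_add, mul_assoc, ← pow_add, ← two_mul, pow_mul, neg_one_sq, one_pow, mul_one]
  push_cast
  rw [mul_one, ← hsign]
  ring

theorem Nat.succ_ascFactorial_succ (d k : ℕ) :
    (d + 1).ascFactorial (k + 1) = (d + k + 1) * (d + k).choose d * k ! := by
  have h := Nat.factorial_mul_ascFactorial d (k + 1)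
  rw [← add_assoc, Nat.factorial_succ, ← Nat.add_choose_mul_factorial_mul_factorial d k] at h
  apply Nat.eq_of_mul_eq_mul_left d.factorial_pos
  rw [h, Nat.choose_symm_add]
  ring

theorem fwdDiff_iter_inv_natCast {K : Type*} [Field K] [CharZero K] (k y : ℕ) :
    (Δ_[1])^[k] (fun n : ℕ ↦ (n : K)⁻¹) (y + 1)
      = (-1) ^ k * k ! / (y + 1).ascFactorial (k + 1) := by
  induction k generalizing y with
  | zero => simp [Nat.ascFactorial]
  | succ k ih =>
    rw [Function.iterate_succ_apply', fwdDiff, ih, ih]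
    have hA : ((y + 1).ascFactorial (k + 1) : K) ≠ 0 :=
      Nat.cast_ne_zero.mpr (Nat.ascFactorial_pos _ _).ne'
    have hB : ((y + 1 + 1).ascFactorial (k + 1) : K)
        = (y + k + 2) * (y + 1).ascFactorial (k + 1) / (y + 1) := by
      rw [eq_div_iff (Nat.cast_add_one_ne_zero y)]
      have := Nat.succ_ascFactorial (y + 1) (k + 1)
      push_cast [mul_comm _ ((y : K) + 1), show y + 1 + (k + 1) = y + k + 2 by ring] at this ⊢
      exact_mod_cast this
    have hC : ((y + 1).ascFactorial (k + 1 + 1) : K)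
        = (y + k + 2) * (y + 1).ascFactorial (k + 1) := by
      rw [Nat.ascFactorial_succ]
      push_cast
      ring
    rw [hB, hC, Nat.factorial_succ]
    generalize ((y + 1).ascFactorial (k + 1) : K) = A at hA ⊢
    have hyk : (y + k + 2 : K) ≠ 0 := by exact_mod_cast (by omega : y + k + 2 ≠ 0)
    push_cast
    field_simp
    ring

theorem sum_range_neg_one_pow_mul_choose_mul_inv {K : Type*} [Field K] [CharZero K] (d k : ℕ) :
    ∑ j ∈ range (k + 1), (-1) ^ j * k.choose j * ((d + 1 + j : ℕ) : K)⁻¹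
      = ((d + k + 1) * (d + k).choose d : K)⁻¹ := by
  rw [sum_range_neg_one_pow_mul_choose_mul_eq_fwdDiff_iter (fun n : ℕ ↦ (n : K)⁻¹),
    fwdDiff_iter_inv_natCast, Nat.succ_ascFactorial_succ]
  have hk : (k ! : K) ≠ 0 := Nat.cast_ne_zero.mpr k.factorial_ne_zero
  push_cast
  rw [mul_div_mul_right _ _ hk, ← mul_div_assoc, ← mul_pow, neg_one_mul, neg_neg, one_pow,
    one_div]

theorem alternating_sum_choose_general (n d : ℕ) :
    ∑ m ∈ Finset.Icc (d + 1) n,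
        ((-1 : ℚ) ^ (m - 1) / m) * ((n - d - 1).choose (m - 1 - d) : ℚ)
      = (-1 : ℚ) ^ d / (n * ((n - 1).choose d : ℚ)) := by
  rcases lt_or_ge d n with hdn | hnd
  · obtain ⟨k, rfl⟩ : ∃ k, n = d + k + 1 := ⟨n - d - 1, by omega⟩
    rw [← Ico_add_one_right_eq_Icc, sum_Ico_eq_sum_range,
      show d + k + 1 + 1 - (d + 1) = k + 1 by omega]
    calc _ = (-1) ^ d
            * ∑ j ∈ range (k + 1), (-1) ^ j * k.choose j * ((d + 1 + j : ℕ) : ℚ)⁻¹ := by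
          rw [mul_sum]
          refine sum_congr rfl fun j _ ↦ ?_
          rw [show d + 1 + j - 1 = d + j by omega, show d + k + 1 - d - 1 = k by omega,
            show d + j - d = j by omega, pow_add]
          ring
      _ = _ := by
          rw [sum_range_neg_one_pow_mul_choose_mul_inv, show d + k + 1 - 1 = d + k by omega]
          push_cast
          ring
  · rw [Icc_eq_empty (by omega), sum_empty]
    rcases n.eq_zero_or_pos with rfl | hn
    · simp
    · rw [Nat.choose_eq_zero_of_lt (by omega)]
      simp

/-- For integers `n ≥ 1` and `0 ≤ d ≤ n - 1`, the alternating sum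
`∑_{m=d+1}^{n} ((-1)^{m-1}/m) · C(n-d-1, m-1-d)` equals `(-1)^d / (n · C(n-1, d))`. -/
theorem alternating_sum_choose (n d : ℕ) (hn : 1 ≤ n) (hd : d ≤ n - 1) :
    ∑ m ∈ Finset.Icc (d + 1) n,
        ((-1 : ℚ) ^ (m - 1) / m) * ((n - d - 1).choose (m - 1 - d) : ℚ)
      = (-1 : ℚ) ^ d / (n * ((n - 1).choose d : ℚ)) :=
  alternating_sum_choose_general n d
end

section
/- In ℚ⟨⟨X,Y⟩⟩, the degree-3 homogeneous component of log(exp(X)·exp(Y)) equals (1/12)XXY - (1/6)XYX + (1/12)XYY + (1/12)YXX - (1/6)YXY + (1/12)YYX, which equals (1/12)[X,[X,Y]] + (1/12)[Y,[Y,X]]. -/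
/-- The degree-`m` homogeneous component of `exp X * exp Y`:
`E X Y m = ∑_{p+q=m} X^p Y^q / (p! q!)`. -/
noncomputable def bchE {A : Type*} [Ring A] [Algebra ℚ A] (X Y : A) (m : ℕ) : A :=
  ∑ p ∈ Finset.range (m + 1),
    (((p.factorial : ℚ) * ((m - p).factorial : ℚ))⁻¹) • (X ^ p * Y ^ (m - p))

/-- The degree-`m` homogeneous component `Φ_m(X,Y)` of `log (exp X * exp Y)`, obtained from
`log(1+Z) = ∑_k (-1)^{k-1} Z^k / k` with `Z = exp X exp Y - 1` by collecting, for each `k`,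
the compositions `m = m₁ + ⋯ + m_k` into positive parts, each part contributing the degree-`mᵢ`
component of `exp X exp Y`. -/
noncomputable def bchPhi {A : Type*} [Ring A] [Algebra ℚ A] (X Y : A) (m : ℕ) : A :=
  ∑ c : Composition m,
    ((-1 : ℚ) ^ (c.length - 1) / (c.length : ℚ)) • (c.blocks.map (bchE X Y)).prod

instance bchDecEqComposition {n : ℕ} : DecidableEq (Composition n) :=
  fun a b => decidable_of_iff (a.blocks = b.blocks) (by cases a; cases b; simp)

def bchC111 : Composition 3 := ⟨[1,1,1], by decide, by decide⟩
def bchC12 : Composition 3 := ⟨[1,2], by decide, by decide⟩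
def bchC21 : Composition 3 := ⟨[2,1], by decide, by decide⟩
def bchC3 : Composition 3 := ⟨[3], by decide, by decide⟩

lemma bchUniv3 : (Finset.univ : Finset (Composition 3)) = {bchC111, bchC12, bchC21, bchC3} :=
  (Finset.eq_univ_of_card _ (by decide)).symm

lemma bchPhi3 {A : Type*} [Ring A] [Algebra ℚ A] (X Y : A) :
    bchPhi X Y 3 = (1/12 : ℚ) • (X*X*Y) - (1/6 : ℚ) • (X*Y*X) + (1/12 : ℚ) • (X*Y*Y)
      + (1/12 : ℚ) • (Y*X*X) - (1/6 : ℚ) • (Y*X*Y) + (1/12 : ℚ) • (Y*Y*X) := by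
  rw [bchPhi, bchUniv3]
  rw [Finset.sum_insert (by decide), Finset.sum_insert (by decide),
    Finset.sum_insert (by decide), Finset.sum_singleton]
  simp only [bchC111, bchC12, bchC21, bchC3, Composition.length, List.length, List.map,
    List.prod_cons, List.prod_nil, mul_one, bchE]
  norm_num [Finset.sum_range_succ, Nat.factorial]
  simp only [mul_add, add_mul, smul_mul_assoc, mul_smul_comm, smul_smul, smul_add, smul_sub,
    mul_assoc, pow_succ, pow_zero, one_mul]
  module

/-- In `ℚ⟨⟨X,Y⟩⟩`, the degree-3 homogeneous component of `log (exp X * exp Y)` equals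
`(1/12)XXY - (1/6)XYX + (1/12)XYY + (1/12)YXX - (1/6)YXY + (1/12)YYX`, which equals
`(1/12)[X,[X,Y]] + (1/12)[Y,[Y,X]]`. -/
theorem bchPhi_three (X Y : FreeAlgebra ℚ (Fin 2))
    (hX : X = FreeAlgebra.ι ℚ 0) (hY : Y = FreeAlgebra.ι ℚ 1) :
    bchPhi X Y 3 =
      (1 / 12 : ℚ) • (X * X * Y) - (1 / 6 : ℚ) • (X * Y * X) + (1 / 12 : ℚ) • (X * Y * Y)
        + (1 / 12 : ℚ) • (Y * X * X) - (1 / 6 : ℚ) • (Y * X * Y)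
        + (1 / 12 : ℚ) • (Y * Y * X) ∧
    bchPhi X Y 3 = (1 / 12 : ℚ) • ⁅X, ⁅X, Y⁆⁆ + (1 / 12 : ℚ) • ⁅Y, ⁅Y, X⁆⁆ := by
  refine ⟨bchPhi3 X Y, ?_⟩
  rw [bchPhi3 X Y]
  simp only [Ring.lie_def, mul_sub, sub_mul, smul_sub, smul_add, mul_assoc]
  module
end

section
/- In ℚ⟨⟨X,Y⟩⟩, the degree-4 homogeneous component of log(exp(X)·exp(Y)) equals (1/24)XXYY - (1/12)XYXY + (1/12)YXYX - (1/24)YYXX, which equals -(1/24)[X,[Y,[X,Y]]]. -/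
namespace Composition

theorem univ_four : (Finset.univ : Finset (Composition 4)) =
    {⟨[4], by decide, rfl⟩, ⟨[1, 3], by decide, rfl⟩, ⟨[3, 1], by decide, rfl⟩,
      ⟨[2, 2], by decide, rfl⟩, ⟨[1, 1, 2], by decide, rfl⟩, ⟨[1, 2, 1], by decide, rfl⟩,
      ⟨[2, 1, 1], by decide, rfl⟩, ⟨[1, 1, 1, 1], by decide, rfl⟩} := by
  symm
  refine Finset.eq_univ_of_card _ ?_
  rw [composition_card]
  decide

theorem sum_univ_four {M : Type*} [AddCommMonoid M] (f : List ℕ → M) :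
    ∑ c : Composition 4, f c.blocks =
      f [4] + f [1, 3] + f [3, 1] + f [2, 2] + f [1, 1, 2] + f [1, 2, 1] + f [2, 1, 1]
        + f [1, 1, 1, 1] := by
  rw [univ_four]
  simp (disch := decide) only [Finset.sum_insert, Finset.sum_singleton, add_assoc]

end Composition

section

variable {A : Type*} [Ring A] [Algebra ℚ A] (X Y : A)

theorem bchE_one : bchE X Y 1 = X + Y := by
  simp [bchE, Finset.sum_range_succ]; abel

theorem bchE_two : bchE X Y 2 = (2⁻¹ : ℚ) • X ^ 2 + X * Y + (2⁻¹ : ℚ) • Y ^ 2 := by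
  simp [bchE, Finset.sum_range_succ, Nat.factorial]
  match_scalars <;> norm_num

theorem bchE_three :
    bchE X Y 3 = (6⁻¹ : ℚ) • X ^ 3 + (2⁻¹ : ℚ) • (X ^ 2 * Y) + (2⁻¹ : ℚ) • (X * Y ^ 2)
      + (6⁻¹ : ℚ) • Y ^ 3 := by
  simp [bchE, Finset.sum_range_succ, Nat.factorial]
  match_scalars <;> norm_num

theorem bchE_four :
    bchE X Y 4 = (24⁻¹ : ℚ) • X ^ 4 + (6⁻¹ : ℚ) • (X ^ 3 * Y) + (4⁻¹ : ℚ) • (X ^ 2 * Y ^ 2)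
      + (6⁻¹ : ℚ) • (X * Y ^ 3) + (24⁻¹ : ℚ) • Y ^ 4 := by
  simp [bchE, Finset.sum_range_succ, Nat.factorial]
  match_scalars <;> norm_num

theorem bchPhi_four_eq :
    bchPhi X Y 4 =
      (1 / 24 : ℚ) • (X * X * Y * Y) - (1 / 12 : ℚ) • (X * Y * X * Y)
        + (1 / 12 : ℚ) • (Y * X * Y * X) - (1 / 24 : ℚ) • (Y * Y * X * X) := by
  refine (Composition.sum_univ_four fun l =>
    ((-1 : ℚ) ^ (l.length - 1) / l.length) • (l.map (bchE X Y)).prod).trans ?_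
  simp only [List.length, List.map, List.prod_cons, List.prod_nil, mul_one,
    bchE_one, bchE_two, bchE_three, bchE_four, pow_succ, pow_zero, one_mul]
  simp only [mul_add, add_mul, smul_mul_assoc, mul_smul_comm, smul_smul, smul_add, mul_assoc]
  match_scalars <;> norm_num

theorem bchPhi_four_eq_lie : bchPhi X Y 4 = -((1 / 24 : ℚ) • ⁅X, ⁅Y, ⁅X, Y⁆⁆⁆) := by
  rw [bchPhi_four_eq]
  simp only [Ring.lie_def, mul_sub, sub_mul, smul_sub, mul_assoc]
  match_scalars <;> norm_num

end

theorem bchPhi_four_general (X Y : FreeAlgebra ℚ (Fin 2)) :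
    bchPhi X Y 4 =
      (1 / 24 : ℚ) • (X * X * Y * Y) - (1 / 12 : ℚ) • (X * Y * X * Y)
        + (1 / 12 : ℚ) • (Y * X * Y * X) - (1 / 24 : ℚ) • (Y * Y * X * X) ∧
    bchPhi X Y 4 = -((1 / 24 : ℚ) • ⁅X, ⁅Y, ⁅X, Y⁆⁆⁆) :=
  ⟨bchPhi_four_eq X Y, bchPhi_four_eq_lie X Y⟩

/-- In `ℚ⟨⟨X,Y⟩⟩`, the degree-4 homogeneous component of `log (exp X * exp Y)` equals
`(1/24)XXYY - (1/12)XYXY + (1/12)YXYX - (1/24)YYXX`, which equals `-(1/24)[X,[Y,[X,Y]]]`. -/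
theorem bchPhi_four (X Y : FreeAlgebra ℚ (Fin 2))
    (hX : X = FreeAlgebra.ι ℚ 0) (hY : Y = FreeAlgebra.ι ℚ 1) :
    bchPhi X Y 4 =
      (1 / 24 : ℚ) • (X * X * Y * Y) - (1 / 12 : ℚ) • (X * Y * X * Y)
        + (1 / 12 : ℚ) • (Y * X * Y * X) - (1 / 24 : ℚ) • (Y * Y * X * X) ∧
    bchPhi X Y 4 = -((1 / 24 : ℚ) • ⁅X, ⁅Y, ⁅X, Y⁆⁆⁆) :=
  bchPhi_four_general X Y
end

section
/- The Dynkin–Specht–Wever theorem: if P is a homogeneous Lie polynomial of degree n in the free Lie algebra over ℚ (viewed inside the free associative algebra), and r is the linear map sending each word a₁a₂⋯aₙ to the right-nested bracket [a₁,[a₂,...,[a_{n-1},aₙ]...]], then r(P) = n·P. -/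
/-!
On Lie elements, `r` agrees with the Euler derivation `D` of the free algebra, which multiplies
each word by its length; on a homogeneous element of degree `n`, `D` is multiplication by `n`.

For a Lie element `u` and any `w` without constant term, `r (u * w) = ⁅u, r w⁆`: for a generator
this is the definition of `r`, and the Jacobi identity carries it through brackets. Hence
`r ⁅x, y⁆ = ⁅x, r y⁆ - ⁅y, r x⁆` for Lie elements `x, y`, which by induction equals
`⁅D x, y⁆ + ⁅x, D y⁆ = D ⁅x, y⁆`.
-/

/-- Right-to-left Lie bracketing of a word: `[a₁,[a₂,...,[a_{n-1},aₙ]...]]`, computed in the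
free associative algebra with the commutator bracket `[a,b] = ab - ba`. -/
noncomputable def rightBracket {k : ℕ} : List (Fin k) → FreeAlgebra ℚ (Fin k)
  | [] => 0
  | [a] => FreeAlgebra.ι ℚ a
  | a :: l => ⁅FreeAlgebra.ι ℚ a, rightBracket l⁆

/-- The unique linear map on the free associative algebra sending each word
`a₁a₂⋯aₙ` to its right-nested bracketing `[a₁,[a₂,...,[a_{n-1},aₙ]...]]`. -/
noncomputable def rMap (k : ℕ) : FreeAlgebra ℚ (Fin k) →ₗ[ℚ] FreeAlgebra ℚ (Fin k) :=
  (FreeAlgebra.basisFreeMonoid ℚ (Fin k)).constr ℚ fun w => rightBracket (FreeMonoid.toList w)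

attribute [local instance 100] LieRing.ofAssociativeRing

namespace FreeAlgebra

variable {R X : Type*}

section CommSemiring

variable [CommSemiring R]

theorem basisFreeMonoid_apply (w : FreeMonoid X) :
    basisFreeMonoid R X w = FreeMonoid.lift (ι R) w := by
  change equivMonoidAlgebraFreeMonoid.symm (MonoidAlgebra.single w 1) = _
  simp [equivMonoidAlgebraFreeMonoid]

theorem basisFreeMonoid_ofList (l : List X) :
    basisFreeMonoid R X (FreeMonoid.ofList l) = (l.map (ι R)).prod := by
  rw [basisFreeMonoid_apply, FreeMonoid.lift_ofList]

theorem basisFreeMonoid_one : basisFreeMonoid R X 1 = 1 := by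
  rw [basisFreeMonoid_apply, map_one]

theorem basisFreeMonoid_of (a : X) : basisFreeMonoid R X (.of a) = ι R a := by
  rw [basisFreeMonoid_apply, FreeMonoid.lift_eval_of]

theorem basisFreeMonoid_mul (v w : FreeMonoid X) :
    basisFreeMonoid R X (v * w) = basisFreeMonoid R X v * basisFreeMonoid R X w := by
  simp only [basisFreeMonoid_apply, map_mul]

theorem ι_mul_basisFreeMonoid (a : X) (w : FreeMonoid X) :
    ι R a * basisFreeMonoid R X w = basisFreeMonoid R X (.of a * w) := by
  simp only [basisFreeMonoid_apply, map_mul, FreeMonoid.lift_eval_of]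

theorem algebraMapInv_basisFreeMonoid_of_mul (a : X) (w : FreeMonoid X) :
    algebraMapInv (basisFreeMonoid R X (.of a * w)) = 0 := by
  simp [basisFreeMonoid_apply, algebraMapInv]

noncomputable def eulerDerivation : FreeAlgebra R X →ₗ[R] FreeAlgebra R X :=
  (basisFreeMonoid R X).constr R fun w => w.length • basisFreeMonoid R X w

theorem eulerDerivation_basisFreeMonoid (w : FreeMonoid X) :
    eulerDerivation (basisFreeMonoid R X w) = w.length • basisFreeMonoid R X w :=
  (basisFreeMonoid R X).constr_basis R _ w

theorem eulerDerivation_mul (x y : FreeAlgebra R X) :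
    eulerDerivation (x * y) = eulerDerivation x * y + x * eulerDerivation y := by
  have := LinearMap.ext_basis (basisFreeMonoid R X) (basisFreeMonoid R X)
    (B := (LinearMap.mul R _).compr₂ eulerDerivation)
    (B' := LinearMap.mul R _ ∘ₗ eulerDerivation + (LinearMap.mul R _).compl₂ eulerDerivation)
    fun v w => by
      simp only [LinearMap.compr₂_apply, LinearMap.add_apply, LinearMap.comp_apply,
        LinearMap.compl₂_apply, LinearMap.mul_apply', ← basisFreeMonoid_mul,
        eulerDerivation_basisFreeMonoid, FreeMonoid.length_mul, add_smul, smul_mul_assoc,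
        mul_smul_comm]
  exact congr($this x y)

end CommSemiring

section CommRing

variable [CommRing R]

theorem eulerDerivation_lie (x y : FreeAlgebra R X) :
    eulerDerivation ⁅x, y⁆ = ⁅eulerDerivation x, y⁆ + ⁅x, eulerDerivation y⁆ := by
  simp only [Ring.lie_def, map_sub, eulerDerivation_mul]
  abel

theorem eulerDerivation_of_mem_span_words {n : ℕ} {x : FreeAlgebra R X}
    (hx : x ∈ Submodule.span R {x | ∃ l : List X, l.length = n ∧ x = (l.map (ι R)).prod}) :
    eulerDerivation x = n • x := by
  induction hx using Submodule.span_induction with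
  | mem _ h =>
    obtain ⟨l, rfl, rfl⟩ := h
    exact basisFreeMonoid_ofList (R := R) l ▸ eulerDerivation_basisFreeMonoid _
  | zero => simp
  | add x y _ _ hx hy => rw [map_add, hx, hy, smul_add]
  | smul c x _ hx => rw [map_smul, hx, smul_comm]

theorem algebraMapInv_eq_zero_of_mem_lieSpan {u : FreeAlgebra R X}
    (hu : u ∈ LieSubalgebra.lieSpan R (FreeAlgebra R X) (Set.range (ι R))) :
    algebraMapInv u = 0 := by
  induction hu using LieSubalgebra.lieSpan_induction with
  | mem x hx => obtain ⟨a, rfl⟩ := hx; simp [algebraMapInv]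
  | zero => exact map_zero _
  | add x y _ _ hx hy => rw [map_add, hx, hy, add_zero]
  | smul c x _ hx => rw [map_smul, hx, smul_zero]
  | lie x y _ _ _ _ => rw [Ring.lie_def, map_sub, map_mul, map_mul, mul_comm, sub_self]

end CommRing

end FreeAlgebra

open FreeAlgebra

section RightBracketing

variable {k : ℕ}

theorem rMap_basisFreeMonoid (w : FreeMonoid (Fin k)) :
    rMap k (basisFreeMonoid ℚ (Fin k) w) = rightBracket w.toList :=
  (basisFreeMonoid ℚ (Fin k)).constr_basis ℚ _ w

theorem rMap_one : rMap k 1 = 0 :=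
  basisFreeMonoid_one (R := ℚ) ▸ rMap_basisFreeMonoid 1

theorem rMap_ι (i : Fin k) : rMap k (ι ℚ i) = ι ℚ i := by
  rw [← basisFreeMonoid_of, rMap_basisFreeMonoid, basisFreeMonoid_of]
  rfl

-- The correction term lives on the empty word: `r (ι i * 1) = ι i`, but `⁅ι i, r 1⁆ = 0`.
theorem rMap_ι_mul (i : Fin k) (w : FreeAlgebra ℚ (Fin k)) :
    rMap k (ι ℚ i * w) = ⁅ι ℚ i, rMap k w⁆ + algebraMapInv w • ι ℚ i := by
  have := (basisFreeMonoid ℚ (Fin k)).ext (f₁ := rMap k ∘ₗ LinearMap.mulLeft ℚ (ι ℚ i))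
    (f₂ := LieModule.toEnd ℚ _ _ (ι ℚ i) ∘ₗ rMap k + algebraMapInv.toLinearMap.smulRight (ι ℚ i))
    fun w => by
      cases w using FreeMonoid.casesOn with
      | one => simp [basisFreeMonoid_one, rMap_one, rMap_ι]
      | of_mul a w =>
        simp [rMap_basisFreeMonoid, ι_mul_basisFreeMonoid, rightBracket,
          algebraMapInv_basisFreeMonoid_of_mul]
  exact congr($this w)

theorem rMap_mul_of_mem_lieSpan {u : FreeAlgebra ℚ (Fin k)}
    (hu : u ∈ LieSubalgebra.lieSpan ℚ (FreeAlgebra ℚ (Fin k)) (Set.range (ι ℚ)))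
    {w : FreeAlgebra ℚ (Fin k)} (hw : algebraMapInv w = 0) :
    rMap k (u * w) = ⁅u, rMap k w⁆ := by
  induction hu using LieSubalgebra.lieSpan_induction generalizing w with
  | mem x hx => obtain ⟨i, rfl⟩ := hx; rw [rMap_ι_mul, hw, zero_smul, add_zero]
  | zero => rw [zero_mul, map_zero, zero_lie]
  | add x y _ _ hx hy => rw [add_mul, map_add, hx hw, hy hw, add_lie]
  | smul c x _ hx => rw [smul_mul_assoc, map_smul, hx hw, smul_lie]
  | lie x y _ _ hx hy =>
    have hxw : algebraMapInv (x * w) = 0 := by rw [map_mul, hw, mul_zero]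
    have hyw : algebraMapInv (y * w) = 0 := by rw [map_mul, hw, mul_zero]
    calc rMap k (⁅x, y⁆ * w) = rMap k (x * (y * w)) - rMap k (y * (x * w)) := by
          rw [Ring.lie_def, sub_mul, mul_assoc, mul_assoc, map_sub]
      _ = ⁅⁅x, y⁆, rMap k w⁆ := by rw [hx hyw, hy hxw, hx hw, hy hw, lie_lie]

theorem rMap_eq_eulerDerivation_of_mem_lieSpan {u : FreeAlgebra ℚ (Fin k)}
    (hu : u ∈ LieSubalgebra.lieSpan ℚ (FreeAlgebra ℚ (Fin k)) (Set.range (ι ℚ))) :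
    rMap k u = eulerDerivation u := by
  induction hu using LieSubalgebra.lieSpan_induction with
  | mem x hx =>
    obtain ⟨i, rfl⟩ := hx
    rw [rMap_ι, ← basisFreeMonoid_of, eulerDerivation_basisFreeMonoid]
    simp
  | zero => rw [map_zero, map_zero]
  | add x y _ _ hx hy => rw [map_add, map_add, hx, hy]
  | smul c x _ hx => rw [map_smul, map_smul, hx]
  | lie x y hx' hy' hx hy =>
    calc rMap k ⁅x, y⁆ = ⁅x, rMap k y⁆ - ⁅y, rMap k x⁆ := by
          rw [Ring.lie_def, map_sub,
            rMap_mul_of_mem_lieSpan hx' (algebraMapInv_eq_zero_of_mem_lieSpan hy'),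
            rMap_mul_of_mem_lieSpan hy' (algebraMapInv_eq_zero_of_mem_lieSpan hx')]
      _ = eulerDerivation ⁅x, y⁆ := by
          rw [hx, hy, eulerDerivation_lie, ← lie_skew (eulerDerivation x), sub_eq_neg_add]

end RightBracketing

/-- **Dynkin–Specht–Wever theorem.**  If `P` is a homogeneous Lie polynomial of degree `n` in
the free Lie algebra over `ℚ` (viewed inside the free associative algebra
`A = ℚ⟨X₁,...,X_k⟩` as the Lie subalgebra generated by the variables under
`[a,b] = ab - ba`), and `r` is the linear map sending each word `a₁a₂⋯aₙ` to
`[a₁,[a₂,...,[a_{n-1},aₙ]...]]`, then `r(P) = n • P`. -/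
theorem dynkin_specht_wever (k n : ℕ) (P : FreeAlgebra ℚ (Fin k))
    (hLie : P ∈ LieSubalgebra.lieSpan ℚ (FreeAlgebra ℚ (Fin k))
      (Set.range (FreeAlgebra.ι ℚ)))
    (hHomog : P ∈ Submodule.span ℚ
      {x : FreeAlgebra ℚ (Fin k) | ∃ l : List (Fin k), l.length = n ∧
        x = (l.map (FreeAlgebra.ι ℚ)).prod}) :
    rMap k P = (n : ℚ) • P := by
  rw [rMap_eq_eulerDerivation_of_mem_lieSpan hLie, eulerDerivation_of_mem_span_words hHomog,
    Nat.cast_smul_eq_nsmul]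
end

section
/- The multilinear part of degree 3 of log((1+X₁)(1+X₂)(1+X₃)) equals (1/3)(X₁X₂X₃ + X₃X₂X₁) - (1/6)(X₁X₃X₂ + X₂X₁X₃ + X₂X₃X₁ + X₃X₁X₂). -/
open scoped Classical

/-- The relation on the free associative algebra `ℚ⟨X₁,...,Xₙ⟩` identifying with `0` every
word in which some variable appears more than once.  Quotienting by it retains exactly the
span of the multilinear words (each variable appearing at most once), realizing the
truncation "`Xᵢ² = 0`" of the context. -/
def mlRel (n : ℕ) : FreeAlgebra ℚ (Fin n) → FreeAlgebra ℚ (Fin n) → Prop := fun a b =>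
  (∃ l : List (Fin n), ¬ l.Nodup ∧ a = (l.map (FreeAlgebra.ι ℚ)).prod) ∧ b = 0

/-- The multilinear truncation of the free associative algebra on `n` variables. -/
abbrev MLAlg (n : ℕ) := RingQuot (mlRel n)

/-- The generators `X₁, ..., Xₙ` in the multilinear truncation. -/
noncomputable def mlX (n : ℕ) (i : Fin n) : MLAlg n :=
  RingQuot.mkAlgHom ℚ (mlRel n) (FreeAlgebra.ι ℚ i)

/-- The nilpotent element `Z = (1+X₁)(1+X₂)⋯(1+Xₙ) - 1`. -/
noncomputable def mlZ (n : ℕ) : MLAlg n :=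
  (List.ofFn fun i : Fin n => 1 + mlX n i).prod - 1

/-- `log((1+X₁)(1+X₂)⋯(1+Xₙ)) = ∑_{k≥1} (-1)^{k-1} Z^k / k`; since every word of length
`> n` repeats a variable and hence vanishes in the truncation, `Z^{n+1} = 0` and the series
terminates at `k = n`. -/
noncomputable def mlLog (n : ℕ) : MLAlg n :=
  ∑ k ∈ Finset.Icc 1 n, ((-1 : ℚ) ^ (k - 1) / (k : ℚ)) • (mlZ n) ^ k

/-! Every word with a repeated letter vanishes in the truncation, so expanding
`Z = (1+X₁)(1+X₂)(1+X₃) - 1` leaves only a few multilinear words in `Z²` and `Z³`.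
Substituting them into `log = Z - Z²/2 + Z³/3` computes `log` exactly: its words of length 3
form the claimed expression, and the rest is a combination of words of length 1 and 2. -/

section

variable {n : ℕ}

theorem mlX_list_prod_eq_zero_of_not_nodup {l : List (Fin n)} (h : ¬ l.Nodup) :
    (l.map (mlX n)).prod = 0 := by
  have hrel : mlRel n (l.map (FreeAlgebra.ι ℚ)).prod 0 := ⟨⟨l, h, rfl⟩, rfl⟩
  calc (l.map (mlX n)).prod
      = RingQuot.mkAlgHom ℚ (mlRel n) (l.map (FreeAlgebra.ι ℚ)).prod := by
        rw [map_list_prod, List.map_map]; rfl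
    _ = 0 := by rw [RingQuot.mkAlgHom_rel ℚ hrel, map_zero]

theorem mlX_list_prod_eq_zero_of_lt_length {l : List (Fin n)} (h : n < l.length) :
    (l.map (mlX n)).prod = 0 :=
  mlX_list_prod_eq_zero_of_not_nodup fun hl => by
    simpa using h.trans_le (hl.length_le_card)

theorem mlX_mul_self_eq_zero (i : Fin n) : mlX n i * mlX n i = 0 := by
  simpa using mlX_list_prod_eq_zero_of_not_nodup (l := [i, i]) (by simp)

theorem mlX_mul_mlX_mul_mlX_self_eq_zero (i j : Fin n) : mlX n i * (mlX n j * mlX n i) = 0 := by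
  simpa using mlX_list_prod_eq_zero_of_not_nodup (l := [i, j, i]) (by simp)

theorem mlX_mul_mlX_self_mul_eq_zero (i : Fin n) (y : MLAlg n) : mlX n i * (mlX n i * y) = 0 := by
  rw [← mul_assoc, mlX_mul_self_eq_zero, zero_mul]

def wordSpan (n k : ℕ) : Submodule ℚ (MLAlg n) :=
  Submodule.span ℚ {x | ∃ l : List (Fin n), l.length < k ∧ x = (l.map (mlX n)).prod}

theorem list_prod_mem_wordSpan {k : ℕ} (l : List (Fin n)) (h : l.length < k) :
    (l.map (mlX n)).prod ∈ wordSpan n k :=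
  Submodule.subset_span ⟨l, h, rfl⟩

end

local notation "𝕩" => mlX 3

theorem mlX_three_mul_mul_mul_eq_zero (a b c d : Fin 3) : 𝕩 a * (𝕩 b * (𝕩 c * 𝕩 d)) = 0 := by
  simpa using mlX_list_prod_eq_zero_of_lt_length (l := [a, b, c, d]) (by simp)

theorem mlZ_three_eq : mlZ 3 =
    (𝕩 0 + 𝕩 1 + 𝕩 2) + (𝕩 0 * 𝕩 1 + 𝕩 0 * 𝕩 2 + 𝕩 1 * 𝕩 2) + 𝕩 0 * (𝕩 1 * 𝕩 2) := by
  change (1 + 𝕩 0) * ((1 + 𝕩 1) * ((1 + 𝕩 2) * 1)) - 1 = _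
  simp only [mul_one, mul_add, add_mul, one_mul]
  abel

theorem mlZ_three_sq : mlZ 3 ^ 2 =
    (𝕩 0 * 𝕩 1 + 𝕩 1 * 𝕩 0 + 𝕩 0 * 𝕩 2 + 𝕩 2 * 𝕩 0 + 𝕩 1 * 𝕩 2 + 𝕩 2 * 𝕩 1)
      + (2 : ℚ) • (𝕩 0 * (𝕩 1 * 𝕩 2)) + 𝕩 2 * (𝕩 0 * 𝕩 1) + 𝕩 1 * (𝕩 0 * 𝕩 2)
      + 𝕩 0 * (𝕩 2 * 𝕩 1) + 𝕩 1 * (𝕩 2 * 𝕩 0) := by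
  rw [mlZ_three_eq, sq]
  simp only [mul_add, add_mul, mul_assoc, mlX_mul_self_eq_zero, mlX_mul_mlX_mul_mlX_self_eq_zero,
    mlX_mul_mlX_self_mul_eq_zero, mlX_three_mul_mul_mul_eq_zero, mul_zero, add_zero, zero_add]
  module

theorem mlZ_three_cube : mlZ 3 ^ 3 =
    𝕩 0 * (𝕩 1 * 𝕩 2) + 𝕩 0 * (𝕩 2 * 𝕩 1) + 𝕩 1 * (𝕩 0 * 𝕩 2) + 𝕩 1 * (𝕩 2 * 𝕩 0)
      + 𝕩 2 * (𝕩 0 * 𝕩 1) + 𝕩 2 * (𝕩 1 * 𝕩 0) := by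
  rw [pow_succ, mlZ_three_sq, mlZ_three_eq]
  simp only [mul_add, add_mul, smul_mul_assoc, mul_assoc, mlX_mul_self_eq_zero,
    mlX_mul_mlX_mul_mlX_self_eq_zero, mlX_mul_mlX_self_mul_eq_zero, mlX_three_mul_mul_mul_eq_zero,
    mul_zero, smul_zero, add_zero, zero_add]
  module

theorem mlLog_three_eq_series :
    mlLog 3 = mlZ 3 - (1 / 2 : ℚ) • mlZ 3 ^ 2 + (1 / 3 : ℚ) • mlZ 3 ^ 3 := by
  rw [mlLog, show Finset.Icc 1 3 = {1, 2, 3} from rfl, Finset.sum_insert (by decide),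
    Finset.sum_insert (by decide), Finset.sum_singleton]
  norm_num
  module

theorem mlLog_three_eq : mlLog 3 =
    ((𝕩 0 + 𝕩 1 + 𝕩 2) + (1 / 2 : ℚ) • (𝕩 0 * 𝕩 1 + 𝕩 0 * 𝕩 2 + 𝕩 1 * 𝕩 2)
      - (1 / 2 : ℚ) • (𝕩 1 * 𝕩 0 + 𝕩 2 * 𝕩 0 + 𝕩 2 * 𝕩 1))
    + ((1 / 3 : ℚ) • (𝕩 0 * 𝕩 1 * 𝕩 2 + 𝕩 2 * 𝕩 1 * 𝕩 0)
      - (1 / 6 : ℚ) • (𝕩 0 * 𝕩 2 * 𝕩 1 + 𝕩 1 * 𝕩 0 * 𝕩 2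
        + 𝕩 1 * 𝕩 2 * 𝕩 0 + 𝕩 2 * 𝕩 0 * 𝕩 1)) := by
  rw [mlLog_three_eq_series, mlZ_three_sq, mlZ_three_cube, mlZ_three_eq]
  simp only [mul_assoc]
  module

/-- The degree-3 multilinear part of `log((1+X₁)(1+X₂)(1+X₃))` equals
`(1/3)(X₁X₂X₃ + X₃X₂X₁) - (1/6)(X₁X₃X₂ + X₂X₁X₃ + X₂X₃X₁ + X₃X₁X₂)`; equivalently, the
difference between `log((1+X₁)(1+X₂)(1+X₃))` and this expression lies in the span of the
products of fewer than 3 generators. -/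
theorem multilinear_log_three_degree_three :
    mlLog 3 -
        ((1 / 3 : ℚ) • (mlX 3 0 * mlX 3 1 * mlX 3 2 + mlX 3 2 * mlX 3 1 * mlX 3 0)
          - (1 / 6 : ℚ) • (mlX 3 0 * mlX 3 2 * mlX 3 1 + mlX 3 1 * mlX 3 0 * mlX 3 2
            + mlX 3 1 * mlX 3 2 * mlX 3 0 + mlX 3 2 * mlX 3 0 * mlX 3 1)) ∈
      Submodule.span ℚ
        {x : MLAlg 3 | ∃ l : List (Fin 3), l.length < 3 ∧ x = (l.map (mlX 3)).prod} := by
  change _ ∈ wordSpan 3 3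
  rw [mlLog_three_eq, add_sub_cancel_right]
  have hlin (i : Fin 3) : mlX 3 i ∈ wordSpan 3 3 := by
    simpa using list_prod_mem_wordSpan (k := 3) [i] (by simp)
  have hquad (i j : Fin 3) : mlX 3 i * mlX 3 j ∈ wordSpan 3 3 := by
    simpa using list_prod_mem_wordSpan (k := 3) [i, j] (by simp)
  apply_rules [add_mem, sub_mem, Submodule.smul_mem]
end

section
/- The subspace L_n(X₁,...,Xₙ) of the free Lie algebra over ℚ spanned by Lie brackets in which each of the n generators appears exactly once has dimension (n-1)!. -/
/-- `IsMultilinearBracket n s x` means that `x` is an iterated Lie bracket of the generators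
of the free Lie algebra on `n` variables, in which each generator indexed in `s` appears
exactly once (and no other generator appears). -/
inductive IsMultilinearBracket (n : ℕ) : Finset (Fin n) → FreeLieAlgebra ℚ (Fin n) → Prop
  | of (i : Fin n) : IsMultilinearBracket n {i} (FreeLieAlgebra.of ℚ i)
  | br {s t : Finset (Fin n)} {x y : FreeLieAlgebra ℚ (Fin n)} :
      IsMultilinearBracket n s x → IsMultilinearBracket n t y → Disjoint s t →
      IsMultilinearBracket n (s ∪ t) ⁅x, y⁆


/-!
Fix a generator `x_j`. By the Jacobi identity, `ad` of a multilinear bracket maps right-normed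
brackets `[x_{i₁}, [x_{i₂}, …, [x_{i_k}, x_j]…]]` to combinations of such brackets, so every
multilinear bracket in which `x_j` occurs is a combination of right-normed brackets ending in `x_j`,
the `i`'s running over the orderings of the other generators: there are `(n-1)!` of them.
They are linearly independent: mapped into the free associative algebra, the bracket for the word
`w` contains the word `w j` with coefficient `1`, and it is the only one of its words ending in `j`,
because in each commutator `x_i a - a x_i` only the first term can end in `j`.
-/

open Submodule

namespace FreeAlgebra

variable {R X : Type*} [CommRing R]

noncomputable def wordCoeff (w : List X) : Module.Dual R (FreeAlgebra R X) :=
  (basisFreeMonoid R X).coord (FreeMonoid.ofList w)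

theorem wordCoeff_apply (w : List X) (x : FreeAlgebra R X) :
    wordCoeff w x = (equivMonoidAlgebraFreeMonoid x).coeff (FreeMonoid.ofList w) :=
  rfl

theorem equivMonoidAlgebraFreeMonoid_ι (i : X) :
    equivMonoidAlgebraFreeMonoid (ι R i) = MonoidAlgebra.single (FreeMonoid.of i) (1 : R) := by
  simp [equivMonoidAlgebraFreeMonoid, MonoidAlgebra.of_apply]

theorem wordCoeff_ι [DecidableEq X] (w : List X) (i : X) :
    wordCoeff w (ι R i) = if w = [i] then 1 else 0 := by
  rw [wordCoeff_apply, equivMonoidAlgebraFreeMonoid_ι, MonoidAlgebra.coeff_single,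
    ← FreeMonoid.ofList_singleton]
  split_ifs with h
  · rw [h, Finsupp.single_eq_same]
  · exact Finsupp.single_eq_of_ne (FreeMonoid.ofList.injective.ne h)

theorem wordCoeff_ι_mul_cons (i : X) (w : List X) (x : FreeAlgebra R X) :
    wordCoeff (i :: w) (ι R i * x) = wordCoeff w x := by
  rw [wordCoeff_apply, map_mul, equivMonoidAlgebraFreeMonoid_ι, FreeMonoid.ofList_cons,
    MonoidAlgebra.coeff_single_mul_eq_mul_coeff _ fun _ _ => mul_right_inj _, one_mul]
  rfl

theorem wordCoeff_ι_mul_of_head?_ne {w : List X} {i : X} (h : w.head? ≠ some i)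
    (x : FreeAlgebra R X) : wordCoeff w (ι R i * x) = 0 := by
  rw [wordCoeff_apply, map_mul, equivMonoidAlgebraFreeMonoid_ι]
  refine MonoidAlgebra.coeff_single_mul_of_forall_mul_ne _ _ fun u hu => h ?_
  rw [← FreeMonoid.toList_ofList w, ← hu]
  simp

theorem wordCoeff_mul_ι_of_getLast?_ne {w : List X} {i : X} (h : w.getLast? ≠ some i)
    (x : FreeAlgebra R X) : wordCoeff w (x * ι R i) = 0 := by
  rw [wordCoeff_apply, map_mul, equivMonoidAlgebraFreeMonoid_ι]
  refine MonoidAlgebra.coeff_mul_single_of_forall_mul_ne _ _ fun u hu => h ?_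
  rw [← FreeMonoid.toList_ofList w, ← hu]
  simp

end FreeAlgebra

namespace FreeLieAlgebra

variable (R : Type*) {X : Type*} [CommRing R]

noncomputable def rightNormed (l : List X) (j : X) : FreeLieAlgebra R X :=
  l.foldr (fun i x => ⁅of R i, x⁆) (of R j)

@[simp]
theorem rightNormed_nil (j : X) : rightNormed R [] j = of R j :=
  rfl

@[simp]
theorem rightNormed_cons (i : X) (l : List X) (j : X) :
    rightNormed R (i :: l) j = ⁅of R i, rightNormed R l j⁆ :=
  rfl

attribute [local instance 100] LieRing.ofAssociativeRing

noncomputable def toFreeAlgebra : FreeLieAlgebra R X →ₗ⁅R⁆ FreeAlgebra R X :=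
  lift R (FreeAlgebra.ι R)

@[simp]
theorem toFreeAlgebra_of (i : X) : toFreeAlgebra R (of R i) = FreeAlgebra.ι R i :=
  lift_of_apply _ i

open FreeAlgebra in
theorem wordCoeff_toFreeAlgebra_rightNormed [DecidableEq X] {l : List X} {j : X} (hj : j ∉ l)
    (w : List X) : wordCoeff (w ++ [j]) (toFreeAlgebra R (rightNormed R l j)) =
      if w = l then 1 else 0 := by
  induction l generalizing w with
  | nil => simp [wordCoeff_ι]
  | cons i l ih =>
    have hji : j ≠ i := fun h => hj (h ▸ List.mem_cons_self)
    rw [rightNormed_cons, LieHom.map_lie, toFreeAlgebra_of, Ring.lie_def, map_sub,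
      wordCoeff_mul_ι_of_getLast?_ne (by simpa using hji), sub_zero]
    rcases w with _ | ⟨k, w⟩
    · rw [wordCoeff_ι_mul_of_head?_ne (by simpa using hji)]
      simp
    by_cases hk : k = i
    · subst hk
      rw [List.cons_append, wordCoeff_ι_mul_cons, ih (fun h => hj (List.mem_cons_of_mem _ h))]
      simp
    · rw [wordCoeff_ι_mul_of_head?_ne (by simpa using hk)]
      simp [hk]

theorem linearIndepOn_rightNormed (j : X) : LinearIndepOn R (rightNormed R · j) {l | j ∉ l} := by
  classical
  refine LinearIndependent.of_pairwise_dual_eq_zero_one _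
    (fun l => (FreeAlgebra.wordCoeff (l.1 ++ [j])).comp (toFreeAlgebra R).toLinearMap) ?_ ?_
  · intro l l' hne
    simp [wordCoeff_toFreeAlgebra_rightNormed R l'.2, Subtype.val_injective.ne hne]
  · intro l
    simp [wordCoeff_toFreeAlgebra_rightNormed R l.2]

noncomputable def rightNormedSpan (j : X) (s : Finset X) : Submodule R (FreeLieAlgebra R X) :=
  span R ((rightNormed R · j) '' {l | l.Perm s.toList})

theorem lie_of_mem_rightNormedSpan [DecidableEq X] {i j : X} {s : Finset X} (hi : i ∉ s)
    {y : FreeLieAlgebra R X} (hy : y ∈ rightNormedSpan R j s) :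
    ⁅of R i, y⁆ ∈ rightNormedSpan R j (insert i s) := by
  refine (span_le.2 ?_ : rightNormedSpan R j s ≤
    (rightNormedSpan R j (insert i s)).comap (LieAlgebra.ad R _ (of R i))) hy
  rintro _ ⟨l, hl, rfl⟩
  exact subset_span ⟨i :: l, (hl.cons i).trans (Finset.toList_insert hi).symm, rfl⟩

theorem finrank_rightNormedSpan [Nontrivial R] {j : X} {s : Finset X} (hj : j ∉ s) :
    Module.finrank R (rightNormedSpan R j s) = s.card.factorial := by
  classical
  have hperm : {l | l.Perm s.toList} = (s.toList.permutations.toFinset : Set (List X)) := by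
    ext; simp [List.mem_permutations]
  have hindep : LinearIndepOn R (rightNormed R · j) (s.toList.permutations.toFinset : Set _) :=
    (linearIndepOn_rightNormed R j).mono fun l hl =>
      (List.mem_permutations.1 (List.mem_toFinset.1 hl)).mem_iff.not.2 (s.mem_toList.not.2 hj)
  rw [rightNormedSpan, hperm, Set.image_eq_range, finrank_span_eq_card hindep]
  simp only [Finset.coe_sort_coe, Fintype.card_coe]
  rw [List.toFinset_card_of_nodup (List.nodup_permutations _ s.nodup_toList),
    List.length_permutations, Finset.length_toList]

end FreeLieAlgebra

open FreeLieAlgebra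

namespace IsMultilinearBracket

variable {n : ℕ} {s : Finset (Fin n)} {x : FreeLieAlgebra ℚ (Fin n)}

theorem lie_mem_rightNormedSpan (hx : IsMultilinearBracket n s x) {j : Fin n} {t : Finset (Fin n)}
    (hst : Disjoint s t) {y : FreeLieAlgebra ℚ (Fin n)} (hy : y ∈ rightNormedSpan ℚ j t) :
    ⁅x, y⁆ ∈ rightNormedSpan ℚ j (s ∪ t) := by
  induction hx generalizing t y with
  | of i =>
    rw [← Finset.insert_eq]
    exact lie_of_mem_rightNormedSpan ℚ (Finset.disjoint_singleton_left.1 hst) hy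
  | br _ _ hab iha ihb =>
    rw [Finset.disjoint_union_left] at hst
    rw [lie_lie, Finset.union_assoc]
    refine sub_mem (iha (Finset.disjoint_union_right.2 ⟨hab, hst.1⟩) (ihb hst.2 hy)) ?_
    rw [Finset.union_left_comm]
    exact ihb (Finset.disjoint_union_right.2 ⟨hab.symm, hst.2⟩) (iha hst.1 hy)

theorem mem_rightNormedSpan_erase (hx : IsMultilinearBracket n s x) {j : Fin n} (hj : j ∈ s) :
    x ∈ rightNormedSpan ℚ j (s.erase j) := by
  induction hx with
  | of i =>
    obtain rfl : j = i := Finset.mem_singleton.1 hj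
    exact subset_span ⟨[], by simp, rfl⟩
  | @br s₁ s₂ _ _ ha hb hab iha ihb =>
    rcases Finset.mem_union.1 hj with hj₁ | hj₂
    · have hj₂ : j ∉ s₂ := Finset.disjoint_left.1 hab hj₁
      rw [← lie_skew, Finset.erase_union_distrib, Finset.erase_eq_of_notMem hj₂, Finset.union_comm]
      exact neg_mem (hb.lie_mem_rightNormedSpan
        (Finset.disjoint_of_subset_right (s₁.erase_subset j) hab.symm) (iha hj₁))
    · have hj₁ : j ∉ s₁ := Finset.disjoint_right.1 hab hj₂
      rw [Finset.erase_union_distrib, Finset.erase_eq_of_notMem hj₁]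
      exact ha.lie_mem_rightNormedSpan
        (Finset.disjoint_of_subset_right (s₂.erase_subset j) hab) (ihb hj₂)

end IsMultilinearBracket

theorem isMultilinearBracket_rightNormed {n : ℕ} {l : List (Fin n)} {j : Fin n}
    (h : (j :: l).Nodup) : IsMultilinearBracket n (j :: l).toFinset (rightNormed ℚ l j) := by
  induction l with
  | nil => simpa using IsMultilinearBracket.of j
  | cons i l ih =>
    obtain ⟨⟨hji, hjl⟩, hil, hl⟩ : (j ≠ i ∧ j ∉ l) ∧ i ∉ l ∧ l.Nodup := by simpa using h
    rw [show (j :: i :: l).toFinset = {i} ∪ (j :: l).toFinset by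
      rw [List.toFinset_cons, List.toFinset_cons, List.toFinset_cons, Finset.insert_comm,
        Finset.insert_eq i]]
    exact .br (.of i) (ih (List.nodup_cons.2 ⟨hjl, hl⟩)) (by simp [hji.symm, hil])

theorem span_isMultilinearBracket_univ {n : ℕ} (j : Fin n) :
    span ℚ {x | IsMultilinearBracket n Finset.univ x} =
      rightNormedSpan ℚ j (Finset.univ.erase j) := by
  refine le_antisymm (span_le.2 fun x hx => hx.mem_rightNormedSpan_erase (Finset.mem_univ j)) ?_
  refine span_le.2 ?_
  rintro _ ⟨l, hl, rfl⟩
  have hjl : j ∉ l := hl.mem_iff.not.2 (by simp)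
  have hnodup : (j :: l).Nodup := List.nodup_cons.2 ⟨hjl, hl.nodup_iff.2 (Finset.nodup_toList _)⟩
  have huniv : (j :: l).toFinset = Finset.univ := by
    rw [List.toFinset_cons, List.toFinset_eq_of_perm _ _ hl, Finset.toList_toFinset,
      Finset.insert_erase (Finset.mem_univ j)]
  exact subset_span (huniv ▸ isMultilinearBracket_rightNormed hnodup)

/-- The subspace `L_n(X₁,...,Xₙ)` of the free Lie algebra over `ℚ` spanned by the Lie
brackets in which each of the `n` generators appears exactly once has dimension `(n-1)!`. -/
theorem finrank_multilinear_component (n : ℕ) (hn : 1 ≤ n) :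
    Module.finrank ℚ
        (Submodule.span ℚ {x : FreeLieAlgebra ℚ (Fin n) | IsMultilinearBracket n Finset.univ x})
      = (n - 1).factorial := by
  rw [span_isMultilinearBracket_univ ⟨0, hn⟩,
    finrank_rightNormedSpan ℚ (Finset.notMem_erase _ _),
    Finset.card_erase_of_mem (Finset.mem_univ _), Finset.card_univ, Fintype.card_fin]
end
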